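/- Let γ : G → F and μ : G → F* be homomorphisms of finitely generated abelian groups with F free, such that γ*μ : G → G* is (−ε)-symmetric (γ*μ = −ε μ*γ) and such that coker(γ) and coker(μ) are finite. Then: (1) ker(γ) = ker(μ) as subgroups of G; (2) the quotient G/ker(γ) is a finitely generated free abelian group of rank equal to rank(F). -/
import Mathlib


private lemma intModule_eq {M : Type} [AddCommGroup M] (i1 i2 : Module ℤ M) : i1 = i2 :=
  ((AddCommGroup.uniqueIntModule (M := M)).uniq i1).trans
    ((AddCommGroup.uniqueIntModule (M := M)).uniq i2).symm

private lemma free_trans {M : Type} [AddCommGroup M] {i1 i2 : Module ℤ M}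
    (h : @Module.Free ℤ M _ _ i1) : @Module.Free ℤ M _ _ i2 := by
  cases intModule_eq i1 i2; exact h

private lemma finite_trans {M : Type} [AddCommGroup M] {i1 i2 : Module ℤ M}
    (h : @Module.Finite ℤ M _ _ i1) : @Module.Finite ℤ M _ _ i2 := by
  cases intModule_eq i1 i2; exact h

private lemma finrank_trans {M : Type} [AddCommGroup M] {i1 i2 : Module ℤ M} :
    @Module.finrank ℤ M _ _ i1 = @Module.finrank ℤ M _ _ i2 := by
  cases intModule_eq i1 i2; rfl



/-- Let `γ : G → F` and `μ : G → F*` be homomorphisms of finitely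
generated abelian groups, with `F` free, such that `γ*μ : G → G*` is
`(−ε)`-symmetric (i.e. `μ g (γ h) = −ε · μ h (γ g)`) and such that the cokernels
of `γ` and `μ` are finite.  Then `ker γ = ker μ`, and `G / ker γ` is a finitely
generated free abelian group of rank equal to the rank of `F`. -/
theorem stmt_14 (ε : ℤ) (hε : ε = 1 ∨ ε = -1)
    (F G : Type) [AddCommGroup F] [Module ℤ F] [Module.Free ℤ F] [Module.Finite ℤ F]
    [AddCommGroup G] [Module ℤ G] [Module.Finite ℤ G]
    (γ : G →ₗ[ℤ] F) (μ : G →ₗ[ℤ] (F →ₗ[ℤ] ℤ))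
    (hsymm : ∀ g h : G, μ g (γ h) = -ε * (μ h (γ g)))
    (hcokγ : Finite (F ⧸ LinearMap.range γ))
    (hcokμ : Finite ((F →ₗ[ℤ] ℤ) ⧸ LinearMap.range μ)) :
    LinearMap.ker γ = LinearMap.ker μ ∧
    Module.Free ℤ (G ⧸ LinearMap.ker γ) ∧
    Module.Finite ℤ (G ⧸ LinearMap.ker γ) ∧
    Module.finrank ℤ (G ⧸ LinearMap.ker γ) = Module.finrank ℤ F := by
  have hεne : (ε : ℤ) ≠ 0 := by rcases hε with h | h <;> simp [h]
  set n := Nat.card (F ⧸ LinearMap.range γ) with hn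
  have hnpos : 0 < n := Nat.card_pos
  have hnγ : ∀ f : F, (n : ℤ) • f ∈ LinearMap.range γ := by
    intro f
    have h0 : (Submodule.Quotient.mk ((n : ℤ) • f) : F ⧸ LinearMap.range γ) = 0 := by
      rw [Submodule.Quotient.mk_smul, natCast_zsmul]
      exact card_nsmul_eq_zero'
    exact (Submodule.Quotient.mk_eq_zero _).mp h0
  set m := Nat.card ((F →ₗ[ℤ] ℤ) ⧸ LinearMap.range μ) with hm
  have hmpos : 0 < m := Nat.card_pos
  have hmμ : ∀ φ : F →ₗ[ℤ] ℤ, (m : ℤ) • φ ∈ LinearMap.range μ := by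
    intro φ
    have h0 : (Submodule.Quotient.mk ((m : ℤ) • φ) : (F →ₗ[ℤ] ℤ) ⧸ LinearMap.range μ) = 0 := by
      rw [Submodule.Quotient.mk_smul, natCast_zsmul]
      exact card_nsmul_eq_zero'
    exact (Submodule.Quotient.mk_eq_zero _).mp h0
  have hker : LinearMap.ker γ = LinearMap.ker μ := by
    apply le_antisymm
    · intro g hg
      rw [LinearMap.mem_ker] at hg ⊢
      ext f
      obtain ⟨h, hh⟩ := hnγ f
      have : (n : ℤ) * μ g f = 0 := by
        have := hsymm g h
        rw [hg] at this
        simp at this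
        calc (n : ℤ) * μ g f = μ g ((n : ℤ) • f) := by simp [mul_comm]
          _ = μ g (γ h) := by rw [hh]
          _ = 0 := this
      have hne : (n : ℤ) ≠ 0 := by exact_mod_cast hnpos.ne'
      exact (mul_eq_zero.mp this).resolve_left hne |>.symm ▸ rfl
    · intro g hg
      rw [LinearMap.mem_ker] at hg ⊢
      have key : ∀ φ : F →ₗ[ℤ] ℤ, φ (γ g) = 0 := by
        intro φ
        obtain ⟨h, hh⟩ := hmμ φ
        have h1 : μ h (γ g) = 0 := by
          have := hsymm g h
          rw [hg] at this
          simp at this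
          rcases this with h' | h'
          · exact absurd h' hεne
          · exact h'
        have : (m : ℤ) * φ (γ g) = 0 := by
          calc (m : ℤ) * φ (γ g) = ((m : ℤ) • φ) (γ g) := by simp
            _ = μ h (γ g) := by rw [hh]
            _ = 0 := h1
        have hne : (m : ℤ) ≠ 0 := by exact_mod_cast hmpos.ne'
        exact (mul_eq_zero.mp this).resolve_left hne
      let b := Module.Free.chooseBasis ℤ F
      apply b.forall_coord_eq_zero_iff.mp
      intro i
      exact key (b.coord i)
  haveI : IsNoetherian ℤ F := inferInstance
  letI iQ : Module ℤ (G ⧸ LinearMap.ker γ) := Submodule.Quotient.module (LinearMap.ker γ)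
  letI iR : Module ℤ ↥(LinearMap.range γ) := (LinearMap.range γ).module
  let e := LinearMap.quotKerEquivRange γ
  have hfree' : @Module.Free ℤ (G ⧸ LinearMap.ker γ) _ _ iQ := Module.Free.of_equiv e.symm
  have hfin' : @Module.Finite ℤ (G ⧸ LinearMap.ker γ) _ _ iQ :=
    Module.Finite.of_surjective (Submodule.mkQ _) (Submodule.mkQ_surjective _)
  have hrank' : @Module.finrank ℤ (G ⧸ LinearMap.ker γ) _ _ iQ = Module.finrank ℤ F := by
    rw [e.finrank_eq]
    apply le_antisymm (Submodule.finrank_le _)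
    have hnγ' : ∀ f : F, (LinearMap.lsmul ℤ F (n : ℤ)) f ∈ LinearMap.range γ := by
      intro f
      have h := hnγ f
      rw [← Int.cast_smul_eq_zsmul ℤ, Int.cast_id] at h
      simpa [LinearMap.lsmul_apply] using h
    have hinj : Function.Injective (LinearMap.codRestrict (LinearMap.range γ)
        (LinearMap.lsmul ℤ F (n : ℤ)) (fun f => hnγ' f)) := by
      intro x y hxy
      have h1 : LinearMap.lsmul ℤ F (n : ℤ) x = LinearMap.lsmul ℤ F (n : ℤ) y :=
        congrArg Subtype.val hxy
      rw [LinearMap.lsmul_apply, LinearMap.lsmul_apply] at h1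
      have hne : (n : ℤ) ≠ 0 := by exact_mod_cast hnpos.ne'
      exact smul_right_injective F hne h1
    exact LinearMap.finrank_le_finrank_of_injective hinj
  exact ⟨hker, free_trans hfree', finite_trans hfin', finrank_trans.trans hrank'⟩
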